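/- For every graph homomorphism φ : E → F in TBPOG (proper, target bijective), the associated relation R_φ is monotone and target surjective; for every path homomorphism ϑ : F → E in MIPG (monotone, injective on vertices), the associated relation R^ϑ is monotone and target surjective. -/
import Mathlib


/-! Basic theory of directed graphs, finite paths, and relation morphisms
(following "Relation morphisms of directed graphs"). -/

structure DGraph where
  V : Type
  E : Type
  s : E → V
  t : E → V

namespace DGraph

/-- `G.chain u l w` : the list of edges `l` forms a path from `u` to `w`. -/
def chain (G : DGraph) : G.V → List G.E → G.V → Prop
  | v, [], w => v = w
  | v, e :: es, w => G.s e = v ∧ G.chain (G.t e) es w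

theorem chain_append {G : DGraph} :
    ∀ {l1 : List G.E} {u v w : G.V} {l2 : List G.E},
      G.chain u l1 v → G.chain v l2 w → G.chain u (l1 ++ l2) w
  | [], _, _, _, _, h1, h2 => by cases h1; exact h2
  | e :: es, _, _, _, _, h1, h2 => ⟨h1.1, chain_append h1.2 h2⟩

/-- A vertex is regular if it emits at least one and only finitely many edges. -/
def IsRegularV (G : DGraph) (v : G.V) : Prop :=
  (∃ e, G.s e = v) ∧ {e | G.s e = v}.Finite

end DGraph

/-- A finite path in a directed graph (a vertex when `edges = []`). -/
structure FPath (G : DGraph) where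
  src : G.V
  tgt : G.V
  edges : List G.E
  chain : G.chain src edges tgt

namespace FPath

variable {G : DGraph}

/-- A vertex viewed as a length-zero path. -/
def ofVertex (v : G.V) : FPath G := ⟨v, v, [], rfl⟩

/-- An edge viewed as a length-one path. -/
def ofEdge (e : G.E) : FPath G := ⟨G.s e, G.t e, [e], ⟨rfl, rfl⟩⟩

/-- Concatenation of composable paths. -/
def comp (x y : FPath G) (h : x.tgt = y.src) : FPath G where
  src := x.src
  tgt := y.tgt
  edges := x.edges ++ y.edges
  chain := DGraph.chain_append x.chain (by rw [h]; exact y.chain)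

/-- `x.le y` : `x` is an initial subpath of `y`. -/
def le (x y : FPath G) : Prop := x.src = y.src ∧ x.edges <+: y.edges

/-- Two paths are comparable if one is an initial subpath of the other. -/
def comparable (x y : FPath G) : Prop := x.le y ∨ y.le x

/-- A path of length zero. -/
def IsVertex (x : FPath G) : Prop := x.edges = []

end FPath

/-- `IsConcat xs x` : the (nonempty) list of paths `xs` concatenates to `x`. -/
inductive IsConcat {G : DGraph} : List (FPath G) → FPath G → Prop
  | single (x : FPath G) : IsConcat [x] x
  | cons (x : FPath G) {xs : List (FPath G)} {y : FPath G} (h : x.tgt = y.src) :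
      IsConcat xs y → IsConcat (x :: xs) (x.comp y h)

/-- A relation between the finite paths of two graphs. -/
abbrev GraphRel (E F : DGraph) := Set (FPath E × FPath F)

/-- Composition of relations (`RelComp R S` is `S ∘ R` in the usual notation). -/
def RelComp {A B C : Type*} (R : Set (A × B)) (S : Set (B × C)) : Set (A × C) :=
  {p | ∃ b, (p.1, b) ∈ R ∧ (b, p.2) ∈ S}

/-- The relation `R_f = {(x, f x)}` associated to a map. -/
def relOfFun {A B : Type*} (f : A → B) : Set (A × B) := {p | p.2 = f p.1}

/-- The relation `R^g = {(g y, y)}` associated to a map in the opposite direction. -/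
def relOfCofun {A B : Type*} (g : B → A) : Set (A × B) := {p | p.1 = g p.2}

/-- A relation is transitively closed if `(x,y), (x,y'), (x',y') ∈ R` implies `(x',y) ∈ R`. -/
def TransClosed {X Y : Type*} (R : Set (X × Y)) : Prop :=
  ∀ x x' y y', (x, y) ∈ R → (x, y') ∈ R → (x', y') ∈ R → (x', y) ∈ R

/-- A relation morphism of graphs: preimages of vertices are vertices, and
sources and targets are preserved. -/
structure IsRelMorphism (E F : DGraph) (R : GraphRel E F) : Prop where
  vertex : ∀ x y, (x, y) ∈ R → y.IsVertex → x.IsVertex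
  src : ∀ x y, (x, y) ∈ R → (FPath.ofVertex x.src, FPath.ofVertex y.src) ∈ R
  tgt : ∀ x y, (x, y) ∈ R → (FPath.ofVertex x.tgt, FPath.ofVertex y.tgt) ∈ R

/-- Multiplicativity of a relation morphism. -/
def RelMult {E F : DGraph} (R : GraphRel E F) : Prop :=
  ∀ (x x' : FPath E) (y y' : FPath F) (hx : x.tgt = x'.src) (hy : y.tgt = y'.src),
    (x, y) ∈ R → (x', y') ∈ R → (x.comp x' hx, y.comp y' hy) ∈ R

/-- Decomposability of a relation morphism. -/
def RelDecomp {E F : DGraph} (R : GraphRel E F) : Prop :=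
  ∀ (y y' : FPath F) (h : y.tgt = y'.src) (xb : FPath E),
    (xb, y.comp y' h) ∈ R →
    ∃ (x x' : FPath E) (hx : x.tgt = x'.src),
      (x, y) ∈ R ∧ (x', y') ∈ R ∧ x.comp x' hx = xb

/-- Properness: all relation preimages are finite. -/
def RelProper {E F : DGraph} (R : GraphRel E F) : Prop :=
  ∀ y : FPath F, {x | (x, y) ∈ R}.Finite

/-- Vertex disjointness: distinct vertices have disjoint relation preimages. -/
def RelVertexDisjoint {E F : DGraph} (R : GraphRel E F) : Prop :=
  ∀ v v' : F.V, v ≠ v' → ∀ u : FPath E,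
    (u, FPath.ofVertex v) ∈ R → (u, FPath.ofVertex v') ∈ R → False

/-- Target injectivity: the target map restricted to the preimage of each edge is injective. -/
def RelTargetInj {E F : DGraph} (R : GraphRel E F) : Prop :=
  ∀ (f : F.E) (x x' : FPath E), (x, FPath.ofEdge f) ∈ R → (x', FPath.ofEdge f) ∈ R →
    x.tgt = x'.tgt → x = x'

/-- Target surjectivity: the target map `R⁻¹(f) → R⁻¹(t f)` is surjective for each edge. -/
def RelTargetSurj {E F : DGraph} (R : GraphRel E F) : Prop :=
  ∀ (f : F.E) (u : E.V), (FPath.ofVertex u, FPath.ofVertex (F.t f)) ∈ R →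
    ∃ x : FPath E, (x, FPath.ofEdge f) ∈ R ∧ x.tgt = u

/-- Monotonicity of a relation morphism. -/
def RelMonotone {E F : DGraph} (R : GraphRel E F) : Prop :=
  ∀ (x x' : FPath E) (f f' : F.E), (x, FPath.ofEdge f) ∈ R → (x', FPath.ofEdge f') ∈ R →
    x.le x' → x = x' ∧ f = f'

/-- Regularity of a relation morphism. -/
def RelRegular {E F : DGraph} (R : GraphRel E F) : Prop :=
  ∀ v : F.V, F.IsRegularV v → ∀ u : E.V, (FPath.ofVertex u, FPath.ofVertex v) ∈ R →
    ∀ x : FPath E, x.src = u →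
      ∃ (x' : FPath E) (f : F.E), (x', FPath.ofEdge f) ∈ R ∧ F.s f = v ∧ x.comparable x'

/-- A path homomorphism: maps vertices to vertices, commutes with sources and
targets, and is multiplicative with respect to concatenation. -/
def IsPathHom {F E : DGraph} (θ : FPath F → FPath E) : Prop :=
  (∀ x : FPath F, x.IsVertex → (θ x).IsVertex) ∧
  (∀ x : FPath F, θ (FPath.ofVertex x.src) = FPath.ofVertex (θ x).src) ∧
  (∀ x : FPath F, θ (FPath.ofVertex x.tgt) = FPath.ofVertex (θ x).tgt) ∧
  (∀ (x x' : FPath F) (h : x.tgt = x'.src) (h' : (θ x).tgt = (θ x').src),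
    θ (x.comp x' h) = (θ x).comp (θ x') h')

/-- A graph homomorphism is a length-preserving path homomorphism. -/
def IsGraphHom {E F : DGraph} (φ : FPath E → FPath F) : Prop :=
  IsPathHom φ ∧ ∀ x : FPath E, (φ x).edges.length = x.edges.length

/-- Properness of a graph homomorphism: finite fibers over vertices and edges. -/
def GHProper {E F : DGraph} (φ : FPath E → FPath F) : Prop :=
  ∀ y : FPath F, y.edges.length ≤ 1 → {x | φ x = y}.Finite

/-- Target injectivity of a graph homomorphism. -/
def GHTargetInj {E F : DGraph} (φ : FPath E → FPath F) : Prop :=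
  ∀ (f : F.E) (x x' : FPath E), φ x = FPath.ofEdge f → φ x' = FPath.ofEdge f →
    x.tgt = x'.tgt → x = x'

/-- Target surjectivity of a graph homomorphism. -/
def GHTargetSurj {E F : DGraph} (φ : FPath E → FPath F) : Prop :=
  ∀ (f : F.E) (u : E.V), φ (FPath.ofVertex u) = FPath.ofVertex (F.t f) →
    ∃ x : FPath E, φ x = FPath.ofEdge f ∧ x.tgt = u

/-- The relation graph `G_R` of a relation morphism `R : E → F`. -/
def relGraph {E F : DGraph} (R : GraphRel E F) (hR : IsRelMorphism E F R) : DGraph where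
  V := {p : E.V × F.V // (FPath.ofVertex p.1, FPath.ofVertex p.2) ∈ R}
  E := {p : FPath E × F.E // (p.1, FPath.ofEdge p.2) ∈ R}
  s := fun e => ⟨(e.1.1.src, F.s e.1.2), hR.src _ _ e.2⟩
  t := fun e => ⟨(e.1.1.tgt, F.t e.1.2), hR.tgt _ _ e.2⟩

/-- relations associated to TBPOG graph homomorphisms and to MIPG
path homomorphisms are monotone and target surjective. -/
theorem statement19 {E F : DGraph} :
    (∀ φ : FPath E → FPath F, IsGraphHom φ → GHProper φ →
      GHTargetInj φ → GHTargetSurj φ →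
      RelMonotone (relOfFun φ) ∧ RelTargetSurj (relOfFun φ)) ∧
    (∀ θ : FPath F → FPath E, IsPathHom θ →
      (∀ e e' : F.E, (θ (FPath.ofEdge e)).le (θ (FPath.ofEdge e')) → e = e') →
      (∀ v v' : F.V, θ (FPath.ofVertex v) = θ (FPath.ofVertex v') → v = v') →
      RelMonotone (relOfCofun θ) ∧ RelTargetSurj (relOfCofun θ)) := by
  have fext : ∀ {G : DGraph} (x y : FPath G), x.src = y.src → x.tgt = y.tgt →
      x.edges = y.edges → x = y := by
    rintro G ⟨a, b, l, h⟩ ⟨a', b', l', h'⟩ h1 h2 h3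
    cases h1; cases h2; cases h3; rfl
  constructor
  · intro φ hφ _ _ hts
    constructor
    · intro x x' f f' hf hf' hle
      simp only [relOfFun, Set.mem_setOf_eq] at hf hf'
      have hlen := hφ.2 x
      have hlen' := hφ.2 x'
      rw [← hf] at hlen; rw [← hf'] at hlen'
      simp [FPath.ofEdge] at hlen hlen'
      have hedges : x.edges = x'.edges :=
        hle.2.eq_of_length (by rw [← hlen, ← hlen'])
      -- x and x' have one edge each; tgt determined by chain
      obtain ⟨e, he⟩ : ∃ e, x.edges = [e] := by
        cases hx : x.edges with
        | nil => rw [hx] at hlen; simp at hlen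
        | cons a l =>
          rw [hx] at hlen; simp at hlen
          exact ⟨a, by rw [hlen]⟩
      have htgt : x.tgt = x'.tgt := by
        have c1 := x.chain; have c2 := x'.chain
        rw [he] at c1; rw [← hedges, he] at c2
        exact c1.2.symm.trans c2.2
      have hxx : x = x' := fext x x' hle.1 htgt hedges
      refine ⟨hxx, ?_⟩
      have : FPath.ofEdge (G := F) f = FPath.ofEdge f' := by
        rw [hf, hf', hxx]
      have := congrArg FPath.edges this
      simpa [FPath.ofEdge] using this
    · intro f u hu
      simp only [relOfFun, Set.mem_setOf_eq] at hu
      obtain ⟨x, hx1, hx2⟩ := hts f u hu.symm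
      exact ⟨x, hx1.symm, hx2⟩
  · intro θ hθ hmono _
    constructor
    · intro x x' f f' hf hf' hle
      simp only [relOfCofun, Set.mem_setOf_eq] at hf hf'
      subst hf; subst hf'
      have := hmono f f' hle
      subst this
      exact ⟨rfl, rfl⟩
    · intro f u hu
      simp only [relOfCofun, Set.mem_setOf_eq] at hu
      refine ⟨θ (FPath.ofEdge f), rfl, ?_⟩
      have h := hθ.2.2.1 (FPath.ofEdge f)
      have : (FPath.ofEdge (G := F) f).tgt = F.t f := rfl
      rw [this] at h
      rw [← hu] at h
      exact (congrArg FPath.src h).symm
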